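/- arXiv:2605.19680 — 5 statements merged into one kernel-verified Lean document; each statement's English description precedes it below -/
import Mathlib

section
/- For any subset X ⊆ ℝ and any 0 ≤ r ≤ s, there is a correspondence R between B_r(X) and B_s(X) with dis R ≤ 2(s − r); consequently d_GH(B_r(X), B_s(X)) ≤ s − r. -/
open ENNReal

/-- A correspondence between `X` and `Y`: a relation whose projections are surjective. -/
def IsCorrespondence {X Y : Type*} (R : Set (X × Y)) : Prop :=
  (∀ x : X, ∃ y : Y, (x, y) ∈ R) ∧ (∀ y : Y, ∃ x : X, (x, y) ∈ R)

/-- The distortion of a relation between two (pseudo)metric spaces, valued in `ℝ≥0∞`. -/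
noncomputable def relDis {X Y : Type*} [PseudoMetricSpace X] [PseudoMetricSpace Y]
    (R : Set (X × Y)) : ℝ≥0∞ :=
  ⨆ p ∈ R, ⨆ q ∈ R, ENNReal.ofReal |dist p.1 q.1 - dist p.2 q.2|

/-- The Gromov–Hausdorff distance between two (pseudo)metric spaces, defined (via the
standard characterization `2 d_GH = inf dis R`) as half the infimum of distortions of
correspondences. -/
noncomputable def ghDist (X Y : Type*) [PseudoMetricSpace X] [PseudoMetricSpace Y] : ℝ≥0∞ :=
  (⨅ R ∈ {R : Set (X × Y) | IsCorrespondence R}, relDis R) / 2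

/-!
Pair a point of `B_r(X)` with every point of `B_s(X)` at distance at most `s - r`. By the
triangle inequality this relation distorts distances by at most `2(s - r)`. It is a
correspondence because `B_r(X) ⊆ B_s(X)` and, in a normed space, `B_s(X)` is the closed
`(s - r)`-thickening of `B_r(X)`; properness makes the distance to the closed set `B_r(X)`
attained.
-/

open Metric

theorem ghDist_le_half_relDis {α β : Type*} [PseudoMetricSpace α] [PseudoMetricSpace β]
    {R : Set (α × β)} (hR : IsCorrespondence R) : ghDist α β ≤ relDis R / 2 :=
  ENNReal.div_le_div_right (iInf₂_le R hR) 2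

section WithinDist

variable {M : Type*} [PseudoMetricSpace M]

def withinDist (A B : Set M) (ε : ℝ) : Set (A × B) :=
  {p | dist (p.1 : M) p.2 ≤ ε}

theorem relDis_withinDist_le (A B : Set M) (ε : ℝ) :
    relDis (withinDist A B ε) ≤ ENNReal.ofReal (2 * ε) := by
  refine iSup₂_le fun p hp => iSup₂_le fun q hq => ENNReal.ofReal_le_ofReal ?_
  calc |dist p.1 q.1 - dist p.2 q.2| = dist (dist (p.1 : M) q.1) (dist (p.2 : M) q.2) := rfl
    _ ≤ dist (p.1 : M) p.2 + dist (q.1 : M) q.2 := dist_dist_dist_le _ _ _ _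
    _ ≤ 2 * ε := by linarith [hp.out, hq.out]

end WithinDist

theorem isCorrespondence_withinDist_cthickening {E : Type*} [NormedAddCommGroup E]
    [NormedSpace ℝ E] [ProperSpace E] (X : Set E) {r s : ℝ} (hr : 0 ≤ r) (hrs : r ≤ s) :
    IsCorrespondence (withinDist (cthickening r X) (cthickening s X) (s - r)) := by
  constructor
  · intro x
    refine ⟨⟨x, cthickening_mono hrs X x.2⟩, ?_⟩
    simp [withinDist, hrs]
  · intro y
    have hy : (y : E) ∈ cthickening (s - r) (cthickening r X) := by
      rw [cthickening_cthickening (sub_nonneg.2 hrs) hr, sub_add_cancel]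
      exact y.2
    rw [isClosed_cthickening.cthickening_eq_biUnion_closedBall (sub_nonneg.2 hrs)] at hy
    obtain ⟨x, hx, hyx⟩ := Set.mem_iUnion₂.1 hy
    exact ⟨⟨x, hx⟩, by simpa [withinDist, dist_comm] using hyx⟩

theorem stmt_10_general (X : Set ℝ) (r s : ℝ) (hr : 0 ≤ r) (hrs : r ≤ s) :
    (∃ R : Set (↥(Metric.cthickening r X) × ↥(Metric.cthickening s X)),
        IsCorrespondence R ∧ relDis R ≤ ENNReal.ofReal (2 * (s - r))) ∧
      ghDist ↥(Metric.cthickening r X) ↥(Metric.cthickening s X) ≤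
        ENNReal.ofReal (s - r) := by
  have hR := isCorrespondence_withinDist_cthickening X hr hrs
  have hdis := relDis_withinDist_le (cthickening r X) (cthickening s X) (s - r)
  refine ⟨⟨_, hR, hdis⟩, ?_⟩
  calc ghDist _ _ ≤ relDis (withinDist (cthickening r X) (cthickening s X) (s - r)) / 2 :=
        ghDist_le_half_relDis hR
    _ ≤ ENNReal.ofReal (2 * (s - r)) / 2 := ENNReal.div_le_div_right hdis 2
    _ = ENNReal.ofReal (s - r) := by
        rw [ENNReal.ofReal_mul zero_le_two, ENNReal.ofReal_ofNat, mul_comm,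
          ENNReal.mul_div_cancel_right two_ne_zero ofNat_ne_top]

/-- For any nonempty `X ⊆ ℝ` and `0 ≤ r ≤ s`, there is a correspondence `R` between
`B_r(X)` and `B_s(X)` with `dis R ≤ 2(s − r)`; consequently
`d_GH(B_r(X), B_s(X)) ≤ s − r`. -/
theorem stmt_10 (X : Set ℝ) (hX : X.Nonempty) (r s : ℝ) (hr : 0 ≤ r) (hrs : r ≤ s) :
    (∃ R : Set (↥(Metric.cthickening r X) × ↥(Metric.cthickening s X)),
        IsCorrespondence R ∧ relDis R ≤ ENNReal.ofReal (2 * (s - r))) ∧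
      ghDist ↥(Metric.cthickening r X) ↥(Metric.cthickening s X) ≤
        ENNReal.ofReal (s - r) :=
  stmt_10_general X r s hr hrs
end

section
/- For arbitrary subsets A, B of ℝ, the Gromov–Hausdorff distance satisfies d_GH(A, B) ≤ max{d_GH(A, ℝ), d_GH(B, ℝ)}. -/
/-!
Always `d_GH(A, B) ≤ d_H(A, B)`, and for `A, B ⊆ ℝ` the Hausdorff distance is at most
`max (d_H(A, ℝ), d_H(B, ℝ))`, so it suffices that `d_H(A, ℝ) ≤ d_GH(A, ℝ)`. A
correspondence between `A` and `ℝ` of distortion `D` yields a map `g : ℝ → A` distorting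
distances by at most `D`. If `A` missed an interval of radius `ρ > D / 2` around `t`, the
points sent below `t` and those sent above `t` would be `2ρ - D` apart, so by connectedness
of `ℝ` the image of `g` would lie on one side of `t`; but the image of such a map is
unbounded in both directions.
-/

open ENNReal

open Set Metric

def IsRoughIsometry {X Y : Type*} [PseudoMetricSpace X] [PseudoMetricSpace Y] (D : ℝ)
    (g : X → Y) : Prop :=
  ∀ x y, |dist (g x) (g y) - dist x y| ≤ D

theorem isClopen_of_forall_le_dist {X : Type*} [PseudoMetricSpace X] {s : Set X} {ε : ℝ}
    (hε : 0 < ε) (h : ∀ x ∈ s, ∀ y ∉ s, ε ≤ dist x y) : IsClopen s := by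
  refine ⟨isOpen_compl_iff.mp ?_, ?_⟩ <;>
    refine Metric.isOpen_iff.mpr fun x hx => ⟨ε, hε, fun y hy => ?_⟩
  · by_contra hys
    exact (h y (not_not.mp hys) x hx).not_gt (mem_ball.mp hy)
  · by_contra hys
    exact (h x hx y hys).not_gt (mem_ball'.mp hy)

namespace IsRoughIsometry

variable {D : ℝ} {g : ℝ → ℝ}

theorem neg (hg : IsRoughIsometry D g) : IsRoughIsometry D (-g) := fun r s => by
  simpa only [Pi.neg_apply, dist_neg_neg] using hg r s

theorem not_bddBelow_range (hg : IsRoughIsometry D g) : ¬ BddBelow (range g) := by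
  intro hbdd
  have hD : 0 ≤ D := by simpa using hg 0 0
  -- `g r₀` is nearly the lowest value, so `r₀ ± K` are both sent about `K` above it,
  -- although they are `2K` apart.
  obtain ⟨_, ⟨r₀, rfl⟩, hr₀⟩ :=
    exists_lt_of_csInf_lt (range_nonempty g) (lt_add_one (sInf (range g)))
  have hlow : ∀ r, g r₀ - 1 < g r := fun r => by linarith [csInf_le hbdd (mem_range_self r)]
  set K := 2 * D + 2
  have hfar : ∀ s, |s - r₀| = K → K - D ≤ g s - g r₀ ∧ g s - g r₀ ≤ K + D := by
    intro s hs
    have h := hg s r₀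
    rw [Real.dist_eq, Real.dist_eq, hs] at h
    have := hlow s
    rcases abs_le.mp h with ⟨h₁, h₂⟩
    rcases abs_cases (g s - g r₀) with ⟨h₃, _⟩ | ⟨h₃, _⟩ <;> constructor <;> linarith
  have hK : 0 ≤ K := by positivity
  obtain ⟨hp₁, hp₂⟩ := hfar (r₀ + K) (by simp [abs_of_nonneg hK])
  obtain ⟨hm₁, hm₂⟩ := hfar (r₀ - K) (by simp [abs_of_nonneg hK])
  have h := hg (r₀ + K) (r₀ - K)
  rw [Real.dist_eq, Real.dist_eq, show r₀ + K - (r₀ - K) = 2 * K by ring,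
    abs_of_nonneg (by positivity : (0 : ℝ) ≤ 2 * K)] at h
  rcases abs_le.mp h with ⟨h₁, h₂⟩
  rcases abs_cases (g (r₀ + K) - g (r₀ - K)) with ⟨h₃, _⟩ | ⟨h₃, _⟩ <;> linarith

theorem not_bddAbove_range (hg : IsRoughIsometry D g) : ¬ BddAbove (range g) := fun ⟨c, hc⟩ =>
  hg.neg.not_bddBelow_range
    ⟨-c, by rintro _ ⟨r, rfl⟩; exact neg_le_neg (hc (mem_range_self r))⟩

theorem infDist_range_le (hg : IsRoughIsometry D g) (t : ℝ) : infDist t (range g) ≤ D / 2 := by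
  by_contra! hgap
  set ρ := infDist t (range g)
  have hD : 0 ≤ D := by simpa using hg 0 0
  have hside : ∀ r, g r ≤ t - ρ ∨ t + ρ ≤ g r := fun r => by
    have h := infDist_le_dist_of_mem (mem_range_self (f := g) r) (x := t)
    rw [Real.dist_eq] at h
    rcases le_abs'.mp h with h | h
    · right; linarith
    · left; linarith
  have hclopen : IsClopen {r | t < g r} := by
    refine isClopen_of_forall_le_dist (ε := 2 * ρ - D) (by linarith) fun r hr s hs => ?_
    have hr' : t + ρ ≤ g r := (hside r).resolve_left fun h' => by
      have : t < g r := hr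
      linarith
    have hs' : g s ≤ t - ρ := (hside s).resolve_right fun h' => hs (by
      change t < g s
      linarith)
    have h := (abs_le.mp (hg r s)).2
    rw [Real.dist_eq, Real.dist_eq, abs_of_nonneg (by linarith : 0 ≤ g r - g s)] at h
    rw [Real.dist_eq]
    linarith
  rcases isClopen_iff.mp hclopen with h | h
  · refine hg.not_bddAbove_range ⟨t, ?_⟩
    rintro _ ⟨r, rfl⟩
    exact not_lt.mp fun hr => (h ▸ hr : r ∈ (∅ : Set ℝ))
  · refine hg.not_bddBelow_range ⟨t, ?_⟩
    rintro _ ⟨r, rfl⟩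
    exact (h ▸ mem_univ r : r ∈ {r | t < g r}).le

end IsRoughIsometry

section Correspondence

variable {X Y : Type*} [PseudoMetricSpace X] [PseudoMetricSpace Y] {R : Set (X × Y)}

theorem relDis_le_iff {r : ℝ≥0∞} :
    relDis R ≤ r ↔
      ∀ p ∈ R, ∀ q ∈ R, ENNReal.ofReal |dist p.1 q.1 - dist p.2 q.2| ≤ r := by
  simp only [relDis, iSup_le_iff]

theorem ghDist_le_relDis_div_two (hR : IsCorrespondence R) : ghDist X Y ≤ relDis R / 2 :=
  ENNReal.div_le_div_right (iInf₂_le R hR) 2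

theorem le_ghDist_of_forall {r : ℝ≥0∞}
    (h : ∀ R : Set (X × Y), IsCorrespondence R → r ≤ relDis R / 2) :
    r ≤ ghDist X Y := by
  rw [ghDist, ENNReal.le_div_iff_mul_le (by simp) (by simp)]
  exact le_iInf₂ fun R hR => (ENNReal.le_div_iff_mul_le (by simp) (by simp)).mp (h R hR)

theorem exists_isRoughIsometry_of_relDis_ne_top (hR : ∀ y, ∃ x, (x, y) ∈ R)
    (hfin : relDis R ≠ ⊤) : ∃ g : Y → X, IsRoughIsometry (relDis R).toReal g := by
  choose g hg using hR
  exact ⟨g, fun y y' => (ENNReal.ofReal_le_iff_le_toReal hfin).mp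
    (relDis_le_iff.mp le_rfl _ (hg y) _ (hg y'))⟩

end Correspondence

theorem ghDist_le_hausdorffEDist {M : Type*} [PseudoMetricSpace M] (A B : Set M) :
    ghDist A B ≤ hausdorffEDist A B := by
  refine le_of_forall_gt_imp_ge_of_dense fun r hr => ?_
  set R : Set (A × B) := {p | edist (p.1 : M) p.2 < r}
  have hR : IsCorrespondence R := by
    refine ⟨fun a => ?_, fun b => ?_⟩
    · obtain ⟨b, hb, hab⟩ :=
        infEDist_lt_iff.mp ((infEDist_le_hausdorffEDist_of_mem a.2).trans_lt hr)
      exact ⟨⟨b, hb⟩, hab⟩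
    · obtain ⟨a, ha, hba⟩ := infEDist_lt_iff.mp
        ((infEDist_le_hausdorffEDist_of_mem b.2).trans_lt (hausdorffEDist_comm (s := A) ▸ hr))
      exact ⟨⟨a, ha⟩, by rwa [edist_comm] at hba⟩
  have hdis : relDis R ≤ r * 2 := relDis_le_iff.mpr fun p hp q hq => calc
    ENNReal.ofReal |dist p.1 q.1 - dist p.2 q.2|
        ≤ edist (p.1 : M) p.2 + edist (q.1 : M) q.2 := by
      rw [edist_dist, edist_dist, ← ENNReal.ofReal_add dist_nonneg dist_nonneg]
      refine ENNReal.ofReal_le_ofReal ?_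
      simpa only [Subtype.dist_eq, Real.dist_eq] using dist_dist_dist_le (p.1 : M) q.1 p.2 q.2
    _ ≤ r * 2 := by rw [mul_two]; exact add_le_add hp.le hq.le
  exact (ghDist_le_relDis_div_two hR).trans (ENNReal.div_le_of_le_mul hdis)

theorem hausdorffEDist_le_max_of_subset {M : Type*} [PseudoEMetricSpace M] {A B C : Set M}
    (hA : A ⊆ C) (hB : B ⊆ C) :
    hausdorffEDist A B ≤ max (hausdorffEDist A C) (hausdorffEDist B C) := by
  refine hausdorffEDist_le_of_infEDist (fun a ha => ?_) fun b hb => ?_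
  · rw [hausdorffEDist_comm (s := B)]
    exact (infEDist_le_hausdorffEDist_of_mem (hA ha)).trans (le_max_right _ _)
  · rw [hausdorffEDist_comm (s := A)]
    exact (infEDist_le_hausdorffEDist_of_mem (hB hb)).trans (le_max_left _ _)

theorem hausdorffEDist_univ_le_ghDist_real (A : Set ℝ) :
    hausdorffEDist A univ ≤ ghDist A ℝ := by
  refine le_ghDist_of_forall fun R hR => ?_
  rcases eq_or_ne (relDis R) ⊤ with htop | hfin
  · rw [htop, top_div_of_ne_top ofNat_ne_top]
    exact le_top
  obtain ⟨g, hg⟩ := exists_isRoughIsometry_of_relDis_ne_top hR.2 hfin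
  have hg' : IsRoughIsometry (relDis R).toReal fun r => (g r : ℝ) := hg
  have hhalf : relDis R / 2 = ENNReal.ofReal ((relDis R).toReal / 2) := by
    rw [ENNReal.ofReal_div_of_pos two_pos, ofReal_toReal hfin, ofReal_ofNat]
  rw [hhalf]
  refine hausdorffEDist_le_of_infEDist (fun a _ => by simp [infEDist_zero_of_mem (mem_univ a)])
    fun t _ => ?_
  calc infEDist t A ≤ infEDist t (range fun r => (g r : ℝ)) :=
        infEDist_anti (by rintro _ ⟨r, rfl⟩; exact (g r).2)
    _ = ENNReal.ofReal (infDist t (range fun r => (g r : ℝ))) :=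
        (ofReal_toReal (infEDist_ne_top (range_nonempty _))).symm
    _ ≤ ENNReal.ofReal ((relDis R).toReal / 2) :=
        ENNReal.ofReal_le_ofReal (hg'.infDist_range_le t)

theorem stmt_11_general (A B : Set ℝ) :
    ghDist ↥A ↥B ≤ max (ghDist ↥A ℝ) (ghDist ↥B ℝ) := calc
  ghDist A B ≤ hausdorffEDist A B := ghDist_le_hausdorffEDist A B
  _ ≤ max (hausdorffEDist A univ) (hausdorffEDist B univ) :=
    hausdorffEDist_le_max_of_subset (subset_univ A) (subset_univ B)
  _ ≤ max (ghDist A ℝ) (ghDist B ℝ) :=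
    max_le_max (hausdorffEDist_univ_le_ghDist_real A) (hausdorffEDist_univ_le_ghDist_real B)

/-- For arbitrary nonempty subsets `A, B` of `ℝ`,
`d_GH(A, B) ≤ max {d_GH(A, ℝ), d_GH(B, ℝ)}`. -/
theorem stmt_11 (A B : Set ℝ) (hA : A.Nonempty) (hB : B.Nonempty) :
    ghDist ↥A ↥B ≤ max (ghDist ↥A ℝ) (ghDist ↥B ℝ) :=
  stmt_11_general A B
end

section
/- For all λ > 1, the Gromov–Hausdorff distance between ℤ (with the Euclidean metric) and λℤ is at least 1/2. -/
/-!
If a correspondence between `ℤ` and `λℤ` had distortion `< 1`, choosing a partner `λ f(n)` of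
each `n` would give `f : ℤ → ℤ` with `| |n - m| - λ |f n - f m| | < 1`. Such an `f` is injective
and sends consecutive integers to consecutive integers, so it never turns back and
`|f N - f 0| = N`; then `(λ - 1) N < 1` for every `N`, which is absurd for `λ > 1`.
-/

open ENNReal

lemma abs_dist_sub_dist_lt_one_of_relDis_lt_one {X Y : Type*} [PseudoMetricSpace X]
    [PseudoMetricSpace Y] {R : Set (X × Y)} (hR : relDis R < 1) {p q : X × Y} (hp : p ∈ R)
    (hq : q ∈ R) : |dist p.1 q.1 - dist p.2 q.2| < 1 := by
  refine ENNReal.ofReal_lt_one.mp (lt_of_le_of_lt ?_ hR)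
  exact le_iSup₂_of_le p hp <| le_iSup₂_of_le q hq le_rfl

lemma Nat.abs_apply_sub_apply_zero_eq_of_injective_of_abs_step_eq_one {f : ℕ → ℤ}
    (hf : Function.Injective f) (hstep : ∀ n, |f (n + 1) - f n| = 1) (n : ℕ) : |f n - f 0| = n := by
  -- consecutive steps are `±1` and cannot cancel, since `f (n + 2) ≠ f n`
  have hconst : ∀ n, f (n + 1) - f n = f 1 - f 0 := by
    intro n
    induction n with
    | zero => rfl
    | succ n ih =>
      have hne : f (n + 1 + 1) ≠ f n := hf.ne (by omega)
      rcases abs_eq zero_le_one |>.mp (hstep (n + 1)) with h | h <;>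
        rcases abs_eq zero_le_one |>.mp (hstep n) with h' | h' <;> omega
  have hlin : f n - f 0 = n * (f 1 - f 0) := by
    induction n with
    | zero => simp
    | succ n ih => push_cast; linarith [hconst n]
  rw [hlin, abs_mul, Nat.abs_cast, ← zero_add 1, hstep, mul_one]

namespace Int

variable {l : ℝ} {f : ℤ → ℤ}

lemma injective_of_abs_dist_sub_lt_one (hf : ∀ n m, |dist n m - l * dist (f n) (f m)| < 1) :
    Function.Injective f := by
  intro n m h
  by_contra hnm
  have := hf n m
  rw [h, dist_self, mul_zero, sub_zero, abs_of_nonneg dist_nonneg] at this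
  exact (Int.pairwise_one_le_dist hnm).not_gt this

lemma abs_apply_succ_sub_apply_eq_one_of_abs_dist_sub_lt_one (hl : 1 ≤ l)
    (hf : ∀ n m, |dist n m - l * dist (f n) (f m)| < 1) (n : ℤ) : |f (n + 1) - f n| = 1 := by
  have hone : (1 : ℝ) ≤ dist (f (n + 1)) (f n) :=
    Int.pairwise_one_le_dist <| (injective_of_abs_dist_sub_lt_one hf).ne (by omega)
  have hlt : dist (f (n + 1)) (f n) < 2 := by
    have := hf (n + 1) n
    rw [show dist (n + 1) n = 1 by simp, abs_lt] at this
    nlinarith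
  rw [Int.dist_eq, ← Int.cast_sub, ← Int.cast_abs] at hone hlt
  norm_cast at hone hlt
  omega

theorem not_forall_abs_dist_sub_lt_one (hl : 1 < l) :
    ¬ ∀ n m, |dist n m - l * dist (f n) (f m)| < 1 := by
  intro hf
  have hdist (N : ℕ) : dist (f N) (f 0) = N := by
    have := Nat.abs_apply_sub_apply_zero_eq_of_injective_of_abs_step_eq_one
      (f := fun n : ℕ ↦ f n) ((injective_of_abs_dist_sub_lt_one hf).comp Nat.cast_injective)
      (fun n ↦ by exact_mod_cast abs_apply_succ_sub_apply_eq_one_of_abs_dist_sub_lt_one hl.le hf n)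
      N
    rw [Int.dist_eq, ← Int.cast_sub, ← Int.cast_abs]
    exact_mod_cast this
  obtain ⟨N, hN⟩ := exists_nat_gt (1 / (l - 1))
  have hN' : (l - 1) * N < 1 := by
    have := hf N 0
    rw [hdist, Int.dist_eq, abs_lt] at this
    simp only [Int.cast_natCast, Int.cast_zero, sub_zero, Nat.abs_cast] at this
    linarith
  rw [div_lt_iff₀ (by linarith)] at hN
  linarith

end Int

lemma one_le_relDis_range_intCast_range_mul_intCast {l : ℝ} (hl : 1 < l)
    {R : Set (Set.range ((↑) : ℤ → ℝ) × Set.range fun n : ℤ => l * n)}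
    (hR : IsCorrespondence R) : 1 ≤ relDis R := by
  by_contra! hlt
  choose y hy using fun n : ℤ => hR.1 ⟨n, n, rfl⟩
  choose f hf using fun n : ℤ => (y n).2
  refine Int.not_forall_abs_dist_sub_lt_one (f := f) hl fun n m => ?_
  have := abs_dist_sub_dist_lt_one_of_relDis_lt_one hlt (hy n) (hy m)
  have hscale : dist (l * (f n : ℝ)) (l * f m) = l * dist (f n) (f m) := by
    rw [← smul_eq_mul, ← smul_eq_mul, dist_smul₀, Real.norm_of_nonneg (by positivity),
      Int.dist_cast_real]
  simp only [Subtype.dist_eq, ← hf, Int.dist_cast_real] at this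
  rwa [hscale] at this

/-- For all `λ > 1`, the Gromov–Hausdorff distance between `ℤ` and `λℤ`
(as subsets of `ℝ` with the Euclidean metric) is at least `1/2`. -/
theorem stmt_14 (l : ℝ) (hl : 1 < l) :
    (1 / 2 : ℝ≥0∞) ≤
      ghDist ↥(Set.range fun n : ℤ => (n : ℝ)) ↥(Set.range fun n : ℤ => l * n) :=
  ENNReal.div_le_div_right (le_iInf₂ fun _ => one_le_relDis_range_intCast_range_mul_intCast hl) 2
end

section
/- Let X = {3ⁿ : n ∈ ℕ} ⊆ ℝ with the induced metric, and 2X = {2·3ⁿ : n ∈ ℕ}. Then d_GH(X, 2X) = ∞. -/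
/-!
If a correspondence between subsets of `[0, ∞)` has finite distortion `C` and contains the pair
`(x₀, y₀)`, then it relates points at distance at most `C + x₀ + y₀` from each other. But
`3^(n+1)` is at distance at least `3^n` from every point `2 · 3^m`, so no correspondence between
`X` and `2X` has finite distortion.
-/

open ENNReal

section Distortion

variable {X Y : Type*} [PseudoMetricSpace X] [PseudoMetricSpace Y]

theorem ghDist_eq_top_of_forall_relDis_eq_top
    (h : ∀ R : Set (X × Y), IsCorrespondence R → relDis R = ⊤) : ghDist X Y = ⊤ := by
  have hinf : ⨅ R ∈ {R : Set (X × Y) | IsCorrespondence R}, relDis R = ⊤ :=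
    iInf₂_eq_top.2 h
  rw [ghDist, hinf, ENNReal.top_div_of_ne_top ENNReal.ofNat_ne_top]

theorem abs_dist_sub_dist_le_toReal_relDis {R : Set (X × Y)} (hR : relDis R ≠ ⊤)
    {p q : X × Y} (hp : p ∈ R) (hq : q ∈ R) :
    |dist p.1 q.1 - dist p.2 q.2| ≤ (relDis R).toReal :=
  (ENNReal.ofReal_le_iff_le_toReal hR).1 <| le_iSup₂_of_le p hp <| le_iSup₂_of_le q hq le_rfl

end Distortion

theorem abs_sub_le_of_abs_abs_sub_sub_abs_sub_le {x y x₀ y₀ C : ℝ} (hx : 0 ≤ x) (hy : 0 ≤ y)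
    (hx₀ : 0 ≤ x₀) (hy₀ : 0 ≤ y₀) (h : |(|x - x₀| - |y - y₀|)| ≤ C) :
    |x - y| ≤ C + x₀ + y₀ := by
  rw [abs_le] at h ⊢
  rcases abs_cases (x - x₀) with ⟨hx', _⟩ | ⟨hx', _⟩ <;>
  rcases abs_cases (y - y₀) with ⟨hy', _⟩ | ⟨hy', _⟩ <;>
  constructor <;> linarith

theorem pow_le_abs_three_pow_succ_sub_two_mul_three_pow (n m : ℕ) :
    (3 : ℝ) ^ n ≤ |3 ^ (n + 1) - 2 * 3 ^ m| := by
  have hpos : (0 : ℝ) < 3 ^ n := by positivity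
  rw [pow_succ]
  rcases le_or_gt m n with h | h
  · have hle : (3 : ℝ) ^ m ≤ 3 ^ n := pow_le_pow_right₀ (by norm_num) h
    rw [abs_of_nonneg (by linarith)]
    linarith
  · have hle : (3 : ℝ) ^ n * 3 ≤ 3 ^ m := by
      rw [← pow_succ]
      exact pow_le_pow_right₀ (by norm_num) h
    rw [abs_of_nonpos (by linarith)]
    linarith

/-- For `X = {3^n : n ∈ ℕ} ⊆ ℝ` and `2X = {2 · 3^n : n ∈ ℕ}`, `d_GH(X, 2X) = ∞`. -/
theorem stmt_15 :
    ghDist ↥(Set.range fun n : ℕ => (3 : ℝ) ^ n)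
      ↥(Set.range fun n : ℕ => 2 * (3 : ℝ) ^ n) = ⊤ := by
  refine ghDist_eq_top_of_forall_relDis_eq_top fun R hR => ?_
  by_contra hfin
  obtain ⟨⟨_, m₀, rfl⟩, h₀⟩ := hR.1 ⟨1, 0, pow_zero 3⟩
  obtain ⟨n, hn⟩ :=
    pow_unbounded_of_one_lt ((relDis R).toReal + 1 + 2 * 3 ^ m₀) (by norm_num : (1 : ℝ) < 3)
  obtain ⟨⟨_, m, rfl⟩, h⟩ := hR.1 ⟨3 ^ (n + 1), n + 1, rfl⟩
  have hdis := abs_dist_sub_dist_le_toReal_relDis hfin h h₀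
  simp only [Subtype.dist_eq, Real.dist_eq] at hdis
  have hclose := abs_sub_le_of_abs_abs_sub_sub_abs_sub_le (x := 3 ^ (n + 1)) (y := 2 * 3 ^ m)
    (y₀ := 2 * 3 ^ m₀) (by positivity) (by positivity) zero_le_one (by positivity) hdis
  have hfar := pow_le_abs_three_pow_succ_sub_two_mul_three_pow n m
  linarith
end

section
/- For a bounded metric space X, the curve λ ↦ λX (X with metric scaled by λ), λ ∈ [0, ∞), is a geodesic in the Gromov–Hausdorff class: d_GH(λX, μX) = |λ − μ| · d_GH(X, Δ₁) = |λ − μ| · diam(X)/2 for all λ, μ ≥ 0. -/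
/-!
The diagonal correspondence between `λX` and `μX` distorts `d(x, y)` by `|λ - μ| d(x, y)`,
hence at most by `|λ - μ| diam X`. Conversely, a correspondence of distortion `r` gives
`diam (λX) ≤ diam (μX) + r` and `diam (μX) ≤ diam (λX) + r`; since `diam (λX) = λ diam X`,
this forces `r ≥ |λ - μ| diam X`.
-/

open ENNReal

noncomputable example (A : Set ℝ) : ℝ≥0∞ := ghDist ↥A ℝ

open NNReal

/-- The metric space `λX`: the same underlying set with all distances scaled by `l ≥ 0`. -/
noncomputable def scaled (l : ℝ≥0) (X : Type*) [PseudoMetricSpace X] : PseudoMetricSpace X where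
  dist x y := l * dist x y
  dist_self x := by simp
  dist_comm x y := by simp [dist_comm]
  dist_triangle x y z := by
    show (l : ℝ) * dist x z ≤ (l : ℝ) * dist x y + (l : ℝ) * dist y z
    have h := mul_le_mul_of_nonneg_left (dist_triangle x y z) l.coe_nonneg
    linarith [h]

lemma dist_scaled {X : Type*} [PseudoMetricSpace X] (l : ℝ≥0) (x y : X) :
    @dist X (scaled l X).toDist x y = l * dist x y := rfl

lemma edist_scaled {X : Type*} [PseudoMetricSpace X] (l : ℝ≥0) (x y : X) :
    @edist X (scaled l X).toEDist x y = l * edist x y := by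
  rw [@edist_dist X (scaled l X), dist_scaled, edist_dist,
    ENNReal.ofReal_mul l.coe_nonneg, ENNReal.ofReal_coe_nnreal]

lemma ediam_scaled {X : Type*} [PseudoMetricSpace X] (l : ℝ≥0) (s : Set X) :
    @Metric.ediam X (scaled l X).toPseudoEMetricSpace s = l * Metric.ediam s := by
  simp only [Metric.ediam, edist_scaled, ENNReal.mul_iSup]

section Distortion

variable {X Y : Type*} [PseudoMetricSpace X] [PseudoMetricSpace Y] {R : Set (X × Y)}

lemma ofReal_abs_dist_sub_le_relDis {p q : X × Y} (hp : p ∈ R) (hq : q ∈ R) :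
    ENNReal.ofReal |dist p.1 q.1 - dist p.2 q.2| ≤ relDis R :=
  le_iSup₂_of_le p hp <| le_iSup₂_of_le (f := fun q (_ : q ∈ R) =>
    ENNReal.ofReal |dist p.1 q.1 - dist p.2 q.2|) q hq le_rfl

lemma relDis_le_ofReal {c : ℝ} (h : ∀ p ∈ R, ∀ q ∈ R, |dist p.1 q.1 - dist p.2 q.2| ≤ c) :
    relDis R ≤ ENNReal.ofReal c :=
  iSup₂_le fun p hp => iSup₂_le fun q hq => ENNReal.ofReal_le_ofReal (h p hp q hq)

lemma ofReal_le_ofReal_add_ofReal_abs_sub (a b : ℝ) :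
    ENNReal.ofReal a ≤ ENNReal.ofReal b + ENNReal.ofReal |a - b| :=
  (ENNReal.ofReal_le_ofReal (by linarith [le_abs_self (a - b)])).trans ENNReal.ofReal_add_le

lemma ediam_univ_le_add_relDis (hR : ∀ x, ∃ y, (x, y) ∈ R) :
    Metric.ediam (Set.univ : Set X) ≤ Metric.ediam (Set.univ : Set Y) + relDis R := by
  refine Metric.ediam_le fun x _ x' _ => ?_
  obtain ⟨y, hy⟩ := hR x
  obtain ⟨y', hy'⟩ := hR x'
  calc edist x x' ≤ edist y y' + ENNReal.ofReal |dist x x' - dist y y'| := by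
        simpa only [edist_dist] using ofReal_le_ofReal_add_ofReal_abs_sub (dist x x') (dist y y')
    _ ≤ Metric.ediam Set.univ + relDis R :=
        add_le_add (Metric.edist_le_ediam_of_mem trivial trivial)
          (ofReal_abs_dist_sub_le_relDis hy hy')

lemma relDis_preimage_swap_le : relDis (Prod.swap ⁻¹' R) ≤ relDis R :=
  iSup₂_le fun p hp => iSup₂_le fun q hq => by
    simpa only [Prod.fst_swap, Prod.snd_swap, abs_sub_comm] using
      ofReal_abs_dist_sub_le_relDis (R := R) hp hq

lemma relDis_preimage_swap : relDis (Prod.swap ⁻¹' R) = relDis R :=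
  le_antisymm relDis_preimage_swap_le <| by
    simpa only [← Set.preimage_comp, Prod.swap_swap_eq, Set.preimage_id] using
      relDis_preimage_swap_le (R := Prod.swap ⁻¹' R)

lemma ediam_univ_right_le_add_relDis (hR : ∀ y, ∃ x, (x, y) ∈ R) :
    Metric.ediam (Set.univ : Set Y) ≤ Metric.ediam (Set.univ : Set X) + relDis R := by
  simpa only [relDis_preimage_swap] using
    ediam_univ_le_add_relDis (R := Prod.swap ⁻¹' R) fun y => (hR y).imp fun _ h => h

end Distortion

lemma ENNReal.ofReal_abs_toReal_sub_le {a b r : ℝ≥0∞} (ha : a ≠ ⊤) (hb : b ≠ ⊤)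
    (hab : a ≤ b + r) (hba : b ≤ a + r) : ENNReal.ofReal |a.toReal - b.toReal| ≤ r := by
  wlog h : a ≤ b generalizing a b
  · rw [abs_sub_comm]
    exact this hb ha hba hab (le_of_not_ge h)
  rw [abs_of_nonpos (sub_nonpos.2 (ENNReal.toReal_mono hb h)), neg_sub,
    ← ENNReal.toReal_sub_of_le h hb, ENNReal.ofReal_toReal (ENNReal.sub_ne_top hb)]
  exact tsub_le_iff_left.2 hba

section Scaled

variable {X : Type*} [PseudoMetricSpace X] (l μ : ℝ≥0)

lemma relDis_diagonal_scaled_le (hX : Bornology.IsBounded (Set.univ : Set X)) :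
    @relDis X X (scaled l X) (scaled μ X) (Set.diagonal X) ≤
      ENNReal.ofReal (|(l : ℝ) - μ| * Metric.diam (Set.univ : Set X)) := by
  refine @relDis_le_ofReal X X (scaled l X) (scaled μ X) _ _ ?_
  rintro ⟨x, _⟩ (rfl : x = _) ⟨y, _⟩ (rfl : y = _)
  rw [dist_scaled, dist_scaled, ← sub_mul, abs_mul, abs_of_nonneg dist_nonneg]
  exact mul_le_mul_of_nonneg_left (Metric.dist_le_diam_of_mem hX trivial trivial) (abs_nonneg _)

lemma ofReal_le_relDis_scaled (hX : Bornology.IsBounded (Set.univ : Set X))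
    {R : Set (X × X)} (hR : IsCorrespondence R) :
    ENNReal.ofReal (|(l : ℝ) - μ| * Metric.diam (Set.univ : Set X)) ≤
      @relDis X X (scaled l X) (scaled μ X) R := by
  have hl := @ediam_univ_le_add_relDis X X (scaled l X) (scaled μ X) R hR.1
  have hμ := @ediam_univ_right_le_add_relDis X X (scaled l X) (scaled μ X) R hR.2
  rw [ediam_scaled, ediam_scaled] at hl hμ
  have hE := hX.ediam_ne_top
  convert ENNReal.ofReal_abs_toReal_sub_le (ENNReal.mul_ne_top ENNReal.coe_ne_top hE)
    (ENNReal.mul_ne_top ENNReal.coe_ne_top hE) hl hμ using 2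
  rw [ENNReal.toReal_mul, ENNReal.toReal_mul, ← sub_mul, abs_mul, ENNReal.coe_toReal,
    ENNReal.coe_toReal, abs_of_nonneg ENNReal.toReal_nonneg, Metric.diam]

lemma iInf_relDis_scaled (hX : Bornology.IsBounded (Set.univ : Set X)) :
    ⨅ R ∈ {R : Set (X × X) | IsCorrespondence R}, @relDis X X (scaled l X) (scaled μ X) R =
      ENNReal.ofReal (|(l : ℝ) - μ| * Metric.diam (Set.univ : Set X)) :=
  le_antisymm
    (iInf₂_le_of_le (Set.diagonal X) ⟨fun x => ⟨x, rfl⟩, fun y => ⟨y, rfl⟩⟩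
      (relDis_diagonal_scaled_le l μ hX))
    (le_iInf₂ fun _ hR => ofReal_le_relDis_scaled l μ hX hR)

end Scaled

theorem stmt_17_general {X : Type*} [m : MetricSpace X]
    (hX : Bornology.IsBounded (Set.univ : Set X)) (l μ : ℝ≥0) :
    @ghDist X X (scaled l X) (scaled μ X) =
      ENNReal.ofReal (|(l : ℝ) - (μ : ℝ)| * Metric.diam (Set.univ : Set X) / 2) := by
  rw [ghDist, iInf_relDis_scaled l μ hX, ENNReal.ofReal_div_of_pos two_pos, ENNReal.ofReal_ofNat]

/-- For a nonempty bounded metric space `X`, the curve `λ ↦ λX` is a geodesic: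
`d_GH(λX, μX) = |λ − μ| · diam(X)/2`. -/
theorem stmt_17 {X : Type*} [m : MetricSpace X] [Nonempty X]
    (hX : Bornology.IsBounded (Set.univ : Set X)) (l μ : ℝ≥0) :
    @ghDist X X (scaled l X) (scaled μ X) =
      ENNReal.ofReal (|(l : ℝ) - (μ : ℝ)| * Metric.diam (Set.univ : Set X) / 2) :=
  stmt_17_general (m := m) hX l μ
end
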